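/- arXiv:1107.0343 — 3 statements merged into one kernel-verified Lean document; each statement's English description precedes it below -/
import Mathlib

section
/- A vector U satisfying Kirchhoff's equations at all interior nodes of a resistor network with positive conductances (i.e., for each interior node i, Σ_j γ_{ij}(U_j - U_i) = 0 over neighbors j) attains its maximum and minimum values at boundary nodes, provided every interior node is connected to the boundary by a path in the graph. -/
/-!
At a global maximiser `i` of `U`, every term `γ i j * (U j - U i)` of Kirchhoff's equation is
`≤ 0`; if `i` is interior the terms sum to `0`, so they all vanish and every neighbour of `i` is
again a maximiser. Following a path from a maximiser to the boundary, the first boundary node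
reached is therefore a maximiser. The minimum is the maximum of `-U`.
-/

open Finset Relation

theorem Relation.ReflTransGen.exists_of_step {α : Type*} {r : α → α → Prop} {P B : α → Prop}
    (hstep : ∀ a c, ¬ B a → P a → r a c → P c) {a b : α} (hab : ReflTransGen r a b)
    (hb : B b) (ha : P a) : ∃ c, B c ∧ P c := by
  induction hab using ReflTransGen.head_induction_on with
  | refl => exact ⟨b, hb, ha⟩
  | @head x c hxc _ ih =>
    by_cases hx : B x
    · exact ⟨x, hx, ha⟩
    · exact ih (hstep x c hx ha hxc)

section

variable {V : Type*} [Fintype V]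

def IsHarmonicAt (Adj : V → V → Prop) [DecidableRel Adj] (γ : V → V → ℝ) (U : V → ℝ) (i : V) :
    Prop :=
  ∑ j ∈ univ.filter (fun j => Adj i j), γ i j * (U j - U i) = 0

variable {Adj : V → V → Prop} [DecidableRel Adj] {γ : V → V → ℝ} {U : V → ℝ} {i : V}

theorem IsHarmonicAt.neg (h : IsHarmonicAt Adj γ U i) : IsHarmonicAt Adj γ (-U) i := by
  unfold IsHarmonicAt at h ⊢
  rw [← neg_eq_zero, ← sum_neg_distrib, ← h]
  exact sum_congr rfl fun j _ => by simp only [Pi.neg_apply]; ring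

theorem IsHarmonicAt.eq_of_adj_of_forall_le (h : IsHarmonicAt Adj γ U i)
    (hγ : ∀ j, Adj i j → 0 < γ i j) (hmax : ∀ j, U j ≤ U i) {j : V} (hij : Adj i j) :
    U j = U i := by
  have hterm_nonpos : ∀ k ∈ univ.filter (fun k => Adj i k), γ i k * (U k - U i) ≤ 0 :=
    fun k hk => mul_nonpos_of_nonneg_of_nonpos (hγ k (mem_filter.mp hk).2).le
      (sub_nonpos.mpr (hmax k))
  have hterm : γ i j * (U j - U i) = 0 :=
    (sum_eq_zero_iff_of_nonpos hterm_nonpos).mp h j (mem_filter.mpr ⟨mem_univ j, hij⟩)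
  rcases mul_eq_zero.mp hterm with hγ0 | hU0
  · exact absurd hγ0 (hγ j hij).ne'
  · exact sub_eq_zero.mp hU0

theorem exists_boundary_forall_le (hγ : ∀ i j, Adj i j → 0 < γ i j) {boundary : V → Prop}
    (hbne : ∃ v, boundary v) (hconn : ∀ i, ¬ boundary i → ∃ b, boundary b ∧ ReflTransGen Adj i b)
    (hU : ∀ i, ¬ boundary i → IsHarmonicAt Adj γ U i) :
    ∃ b, boundary b ∧ ∀ i, U i ≤ U b := by
  obtain ⟨v, -⟩ := hbne
  obtain ⟨m, -, hm⟩ := exists_max_image univ U ⟨v, mem_univ v⟩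
  have hmax : ∀ j, U j ≤ U m := fun j => hm j (mem_univ j)
  suffices ∃ b, boundary b ∧ U b = U m from
    this.imp fun b ⟨hb, hUb⟩ => ⟨hb, fun j => hUb ▸ hmax j⟩
  by_cases hbm : boundary m
  · exact ⟨m, hbm, rfl⟩
  obtain ⟨b, hb, hpath⟩ := hconn m hbm
  refine hpath.exists_of_step (P := fun a => U a = U m) (fun a c ha hUa hac => ?_) hb rfl
  exact ((hU a ha).eq_of_adj_of_forall_le (hγ a) (hUa ▸ hmax) hac).trans hUa

end

theorem discrete_maximum_principle_general {V : Type*} [Fintype V]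
    (Adj : V → V → Prop) [DecidableRel Adj]
    (γ : V → V → ℝ) (hγ : ∀ i j, Adj i j → 0 < γ i j)
    (boundary : V → Prop)
    (hbne : ∃ v, boundary v)
    (hconn : ∀ i, ¬ boundary i → ∃ b, boundary b ∧ Relation.ReflTransGen Adj i b)
    (U : V → ℝ)
    (hU : ∀ i, ¬ boundary i →
      ∑ j ∈ Finset.univ.filter (fun j => Adj i j), γ i j * (U j - U i) = 0) :
    ∃ bmax bmin, boundary bmax ∧ boundary bmin ∧
      ∀ i, U i ≤ U bmax ∧ U bmin ≤ U i := by
  obtain ⟨bmax, hbmax, hmax⟩ := exists_boundary_forall_le (U := U) hγ hbne hconn hU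
  obtain ⟨bmin, hbmin, hmin⟩ :=
    exists_boundary_forall_le hγ hbne hconn fun i hi => IsHarmonicAt.neg (hU i hi)
  exact ⟨bmax, bmin, hbmax, hbmin, fun i => ⟨hmax i, neg_le_neg_iff.mp (hmin i)⟩⟩

/-- Discrete maximum principle: a potential satisfying Kirchhoff's equations
(with positive conductances) at every interior node of a finite network, each
interior node being connected to the boundary by a path, attains its maximum
and minimum at boundary nodes. -/
theorem discrete_maximum_principle {V : Type*} [Fintype V] [DecidableEq V]
    (Adj : V → V → Prop) [DecidableRel Adj] (hAdj : Symmetric Adj)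
    (γ : V → V → ℝ) (hγ : ∀ i j, Adj i j → 0 < γ i j)
    (boundary : V → Prop) [DecidablePred boundary]
    (hbne : ∃ v, boundary v)
    (hconn : ∀ i, ¬ boundary i → ∃ b, boundary b ∧ Relation.ReflTransGen Adj i b)
    (U : V → ℝ)
    (hU : ∀ i, ¬ boundary i →
      ∑ j ∈ Finset.univ.filter (fun j => Adj i j), γ i j * (U j - U i) = 0) :
    ∃ bmax bmin, boundary bmax ∧ boundary bmin ∧
      ∀ i, U i ≤ U bmax ∧ U bmin ≤ U i :=
  discrete_maximum_principle_general Adj γ hγ boundary hbne hconn U hU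
end

section
/- For integer k with |k| ≤ (n-1)/2 and n odd, the scaled eigenvalue factor satisfies 2/π < sinc(π(1-1/n)/2) ≤ |sinc(kh_θ/2)| ≤ 1, where h_θ = 2π/n and sinc(x) = sin(x)/x (with sinc(0)=1). -/
/-!
With `a = π(1 - 1/n)/2 ∈ [0, π/2)`, the point `k h_θ / 2 = kπ/n` satisfies `|kπ/n| ≤ a`. Since
`sinc` is even and, as the secant slope of the concave `sin` from `0`, antitone on `[0, π]`, we get
`sinc a ≤ sinc |kπ/n| = |sinc (kπ/n)|`; Jordan's inequality `sin a > 2a/π` gives `sinc a > 2/π`.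
-/

/-- `sinc x = sin x / x`, with `sinc 0 = 1`. -/
noncomputable def sinc (x : ℝ) : ℝ := if x = 0 then 1 else Real.sin x / x

open Real hiding sinc
open Set

theorem sinc_eq_real_sinc : _root_.sinc = Real.sinc := rfl

namespace Real

theorem sinc_antitoneOn : AntitoneOn sinc (Icc 0 π) := by
  have hslope : AntitoneOn (slope sin 0) (Icc 0 π \ {0}) :=
    strictConcaveOn_sin_Icc.concaveOn.slope_anti (left_mem_Icc.2 pi_pos.le)
  intro x hx y hy hxy
  rcases eq_or_ne x 0 with rfl | hx0
  · exact sinc_zero ▸ sinc_le_one y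
  have hy0 : y ≠ 0 := by rintro rfl; exact hx0 (le_antisymm hxy hx.1)
  simpa only [sinc_eq_dslope, dslope_of_ne _ hx0, dslope_of_ne _ hy0] using
    hslope ⟨hx, hx0⟩ ⟨hy, hy0⟩ hxy

theorem sinc_nonneg_of_mem_Icc {x : ℝ} (hx : x ∈ Icc 0 π) : 0 ≤ sinc x := by
  rcases eq_or_ne x 0 with rfl | hx0
  · exact sinc_zero ▸ zero_le_one
  rw [sinc_of_ne_zero hx0]
  exact div_nonneg (sin_nonneg_of_nonneg_of_le_pi hx.1 hx.2) hx.1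

theorem sinc_abs (x : ℝ) : sinc |x| = sinc x := by
  rcases abs_choice x with h | h <;> rw [h]
  exact sinc_neg x

theorem abs_sinc_of_abs_le_pi {x : ℝ} (hx : |x| ≤ π) : |sinc x| = sinc |x| := by
  rw [sinc_abs]
  exact abs_of_nonneg (sinc_abs x ▸ sinc_nonneg_of_mem_Icc ⟨abs_nonneg x, hx⟩)

theorem two_div_pi_lt_sinc {x : ℝ} (hx₀ : 0 ≤ x) (hx : x < π / 2) : 2 / π < sinc x := by
  rcases hx₀.eq_or_lt with rfl | hx₀
  · rw [sinc_zero, div_lt_one pi_pos]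
    linarith [pi_gt_three]
  rw [sinc_of_ne_zero hx₀.ne', lt_div_iff₀ hx₀]
  exact mul_lt_sin hx₀ hx

end Real

theorem abs_mul_two_pi_div_div_two_le {n k : ℝ} (hn : 0 < n) (hk : 2 * |k| ≤ n - 1) :
    |k * (2 * π / n) / 2| ≤ π * (1 - 1 / n) / 2 := by
  have hrw : k * (2 * π / n) / 2 = k * π / n := by field_simp
  rw [hrw, abs_div, abs_mul, abs_of_pos pi_pos, abs_of_pos hn, div_le_iff₀ hn]
  have : π * (1 - 1 / n) / 2 * n = π * (n - 1) / 2 := by field_simp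
  rw [this]
  nlinarith [pi_pos]

theorem pi_mul_one_sub_one_div_div_two_mem_Ico {n : ℝ} (hn : 1 ≤ n) :
    π * (1 - 1 / n) / 2 ∈ Ico 0 (π / 2) := by
  have h₀ : 0 < 1 / n := by positivity
  have h₁ : 1 / n ≤ 1 := (div_le_one (by linarith)).2 hn
  constructor <;> nlinarith [pi_pos]

theorem sinc_factor_bounds_general (n : ℕ)
    (k : ℤ) (hk : 2 * |k| ≤ (n : ℤ) - 1)
    (hθ : ℝ) (hhθ : hθ = 2 * Real.pi / n) :
    2 / Real.pi < sinc (Real.pi * (1 - 1 / n) / 2) ∧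
      sinc (Real.pi * (1 - 1 / n) / 2) ≤ |sinc ((k : ℝ) * hθ / 2)| ∧
      |sinc ((k : ℝ) * hθ / 2)| ≤ 1 := by
  have hn : (1 : ℝ) ≤ n := by
    have : 1 ≤ n := by have := abs_nonneg k; omega
    exact_mod_cast this
  have hkr : 2 * |(k : ℝ)| ≤ n - 1 := by exact_mod_cast hk
  obtain ⟨ha₀, ha⟩ := pi_mul_one_sub_one_div_div_two_mem_Ico hn
  have hx := hhθ ▸ abs_mul_two_pi_div_div_two_le (by linarith) hkr
  have hxπ : |(k : ℝ) * hθ / 2| ≤ π := by linarith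
  rw [sinc_eq_real_sinc, abs_sinc_of_abs_le_pi hxπ]
  exact ⟨two_div_pi_lt_sinc ha₀ ha,
    sinc_antitoneOn ⟨abs_nonneg _, hxπ⟩ ⟨ha₀, by linarith⟩ hx, sinc_le_one _⟩

/-- For odd `n` and integer `k` with `|k| ≤ (n-1)/2`, with `h_θ = 2π/n`, one has
`2/π < sinc(π(1-1/n)/2) ≤ |sinc(k h_θ/2)| ≤ 1`. -/
theorem sinc_factor_bounds (n : ℕ) (hn : 0 < n) (hodd : Odd n)
    (k : ℤ) (hk : 2 * |k| ≤ (n : ℤ) - 1)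
    (hθ : ℝ) (hhθ : hθ = 2 * Real.pi / n) :
    2 / Real.pi < sinc (Real.pi * (1 - 1 / n) / 2) ∧
      sinc (Real.pi * (1 - 1 / n) / 2) ≤ |sinc ((k : ℝ) * hθ / 2)| ∧
      |sinc ((k : ℝ) * hθ / 2)| ≤ 1 :=
  sinc_factor_bounds_general n k hk hθ hhθ
end

section
/- With the matrix Λ_γ of the previous statement (entries (Λ_γ)_{p,q} = (1/2π) Σ_k e^{ik(θ_p-θ_q)} f(k²) sinc²(kh_θ/2) for all p,q), the vectors [e^{ikθ}] = (e^{ikθ_1},...,e^{ikθ_n})^T for |k| ≤ (n-1)/2 are eigenvectors: Λ_γ [e^{ikθ}] = (1/h_θ) F̃(ω_k²) [e^{ikθ}] with F̃(ω_k²) = Σ_{m ≡ k mod n} f(m²) sinc²(m h_θ/2); in particular, when f(m²) sinc²(mh_θ/2) vanishes for |m| > (n-1)/2, the eigenvalue is f(k²)sinc²(kh_θ/2)/h_θ. -/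
/-! On the `n` equispaced nodes `θ_q = 2πq/n` the sampled harmonics are orthogonal:
`∑_q e^{i(k-m)θ_q}` is `n` when `m ≡ k (mod n)` and `0` otherwise. Since `sinc²(mh/2) = O(m⁻²)`,
the kernel series converges absolutely, so the finite sum over nodes can be exchanged with it;
multiplying the kernel matrix by `[e^{ikθ}]` then keeps exactly the aliases `m = k + nj` of `k`,
all of which sample to the same vector `[e^{ikθ}]`. If the weights vanish beyond `(n-1)/2`, only
the alias `j = 0` survives. -/

open Complex
open scoped Real

lemma sinc_sq_le_one (x : ℝ) : sinc x ^ 2 ≤ 1 :=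
  (sq_le_one_iff_abs_le_one _).2 (Real.abs_sinc_le_one x)

lemma sq_mul_sinc_sq_le_one (x : ℝ) : x ^ 2 * sinc x ^ 2 ≤ 1 := by
  by_cases hx : x = 0
  · simp [hx]
  · rw [sinc, if_neg hx, div_pow, mul_div_cancel₀ _ (pow_ne_zero 2 hx)]
    exact Real.sin_sq_le_one x

lemma sinc_mul_sq_le {a : ℝ} (ha : a ≠ 0) (x : ℝ) :
    sinc (a * x) ^ 2 ≤ (1 + a⁻¹ ^ 2) / (x ^ 2 + 1) := by
  rw [le_div_iff₀ (by positivity)]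
  have hx : x ^ 2 * sinc (a * x) ^ 2 ≤ a⁻¹ ^ 2 := by
    calc x ^ 2 * sinc (a * x) ^ 2 = a⁻¹ ^ 2 * ((a * x) ^ 2 * sinc (a * x) ^ 2) := by
          field_simp
      _ ≤ a⁻¹ ^ 2 * 1 := by gcongr; exact sq_mul_sinc_sq_le_one _
      _ = a⁻¹ ^ 2 := mul_one _
  nlinarith [sinc_sq_le_one (a * x)]

lemma summable_mul_sinc_sq {a : ℤ → ℝ} {h : ℝ} (hh : h ≠ 0)
    (ha : Summable fun m : ℤ => |a m| / ((m : ℝ) ^ 2 + 1)) :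
    Summable fun m : ℤ => a m * sinc ((m : ℝ) * h / 2) ^ 2 := by
  refine .of_norm_bounded (ha.mul_left (1 + (h / 2)⁻¹ ^ 2)) fun m => ?_
  rw [norm_mul, norm_pow, Real.norm_eq_abs, Real.norm_eq_abs, sq_abs,
    show (m : ℝ) * h / 2 = h / 2 * m by ring]
  calc |a m| * sinc (h / 2 * m) ^ 2
      ≤ |a m| * ((1 + (h / 2)⁻¹ ^ 2) / ((m : ℝ) ^ 2 + 1)) := by
        gcongr
        exact sinc_mul_sq_le (by positivity) _
    _ = (1 + (h / 2)⁻¹ ^ 2) * (|a m| / ((m : ℝ) ^ 2 + 1)) := by ring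

lemma tsum_ite_dvd_sub_eq_tsum_add_mul {α : Type*} [AddCommMonoid α] [TopologicalSpace α]
    {n : ℤ} (hn : n ≠ 0) (g : ℤ → α) (k : ℤ) :
    ∑' m : ℤ, (if n ∣ m - k then g m else 0) = ∑' j : ℤ, g (k + n * j) := by
  have hinj : Function.Injective fun j : ℤ => k + n * j :=
    fun a b hab => mul_left_cancel₀ hn (add_left_cancel hab)
  rw [← hinj.tsum_eq]
  · exact tsum_congr fun j => if_pos ⟨j, by ring⟩
  · intro m hm
    by_contra hm'
    exact hm (if_neg fun ⟨j, hj⟩ => hm' ⟨j, by simp only; omega⟩)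

lemma sub_one_lt_two_mul_abs_add_mul {n k j : ℤ} (hk : 2 * |k| ≤ n - 1) (hj : j ≠ 0) :
    n - 1 < 2 * |k + n * j| := by
  have hn : 0 ≤ n := by linarith [abs_nonneg k]
  have hnj : n ≤ |n * j| := by
    rw [abs_mul, abs_of_nonneg hn]
    exact le_mul_of_one_le_right hn (Int.one_le_abs hj)
  have htri : |n * j| - |k| ≤ |k + n * j| := add_comm (n * j) k ▸ abs_sub_abs_le_abs_add _ _
  linarith [abs_nonneg k]

noncomputable def nodeAngle (n : ℕ) (p : Fin n) : ℝ := 2 * π * (p : ℕ) / n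

lemma exp_I_mul_nodeAngle (m : ℤ) {n : ℕ} (p : Fin n) :
    exp (I * m * nodeAngle n p) = (exp (2 * π * I / n) ^ m) ^ (p : ℕ) := by
  have hn : (n : ℂ) ≠ 0 := Nat.cast_ne_zero.2 p.pos.ne'
  rw [← exp_int_mul, ← exp_nat_mul, nodeAngle]
  push_cast
  congr 1
  field_simp

lemma sum_exp_I_mul_nodeAngle (n : ℕ) (m : ℤ) :
    ∑ p : Fin n, exp (I * m * nodeAngle n p) = if (n : ℤ) ∣ m then (n : ℂ) else 0 := by
  rcases eq_or_ne n 0 with rfl | hn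
  · simp
  rw [Fintype.sum_congr _ _ (exp_I_mul_nodeAngle m)]
  have hζ := isPrimitiveRoot_exp n hn
  generalize exp (2 * π * I / n) = ζ at hζ ⊢
  rw [Fin.sum_univ_eq_sum_range (fun i => (ζ ^ m) ^ i)]
  split_ifs with hdvd
  · rw [(hζ.zpow_eq_one_iff_dvd m).2 hdvd]
    simp
  · have hzn : (ζ ^ m) ^ n = 1 := by
      rw [← zpow_natCast, ← zpow_mul, mul_comm, zpow_mul, zpow_natCast, hζ.pow_eq_one, one_zpow]
    rw [geom_sum_eq (mt (hζ.zpow_eq_one_iff_dvd m).1 hdvd), hzn, sub_self, zero_div]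

lemma exp_I_mul_add_mul_nodeAngle {n : ℕ} (m j : ℤ) (p : Fin n) :
    exp (I * ((m + n * j : ℤ) : ℂ) * nodeAngle n p) = exp (I * m * nodeAngle n p) := by
  rw [exp_I_mul_nodeAngle, exp_I_mul_nodeAngle, zpow_add₀ (exp_ne_zero _), zpow_mul,
    zpow_natCast, (isPrimitiveRoot_exp n p.pos.ne').pow_eq_one, one_zpow, mul_one]

lemma sum_exp_I_mul_nodeAngle_sub_mul {n : ℕ} (m k : ℤ) (p : Fin n) :
    ∑ q, exp (I * m * (nodeAngle n p - nodeAngle n q)) * exp (I * k * nodeAngle n q) =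
      if (n : ℤ) ∣ m - k then (n : ℂ) * exp (I * k * nodeAngle n p) else 0 := by
  have hsplit : ∀ q, exp (I * m * (nodeAngle n p - nodeAngle n q)) * exp (I * k * nodeAngle n q) =
      exp (I * m * nodeAngle n p) * exp (I * ((k - m : ℤ) : ℂ) * nodeAngle n q) := by
    intro q
    rw [← exp_add, ← exp_add]
    push_cast
    ring_nf
  simp_rw [hsplit]
  rw [← Finset.mul_sum, sum_exp_I_mul_nodeAngle]
  by_cases hdvd : (n : ℤ) ∣ m - k
  · rw [if_pos (dvd_sub_comm.1 hdvd), if_pos hdvd]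
    obtain ⟨j, hj⟩ := hdvd
    rw [show m = k + n * j by omega, exp_I_mul_add_mul_nodeAngle, mul_comm]
  · rw [if_neg (mt dvd_sub_comm.1 hdvd), if_neg hdvd, mul_zero]

lemma mulVec_exp_I_mul_nodeAngle {n : ℕ} {c : ℤ → ℂ} (hc : Summable c) (k : ℤ) :
    (Matrix.of fun p q : Fin n =>
        ∑' m : ℤ, exp (I * m * (nodeAngle n p - nodeAngle n q)) * c m).mulVec
      (fun q => exp (I * k * nodeAngle n q)) =
      ((n : ℂ) * ∑' j : ℤ, c (k + n * j)) • fun q => exp (I * k * nodeAngle n q) := by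
  ext p
  have hn : (n : ℤ) ≠ 0 := by exact_mod_cast p.pos.ne'
  have hsummable : ∀ q : Fin n, Summable fun m : ℤ =>
      exp (I * m * (nodeAngle n p - nodeAngle n q)) * c m * exp (I * k * nodeAngle n q) := by
    intro q
    refine .of_norm_bounded (summable_norm_iff.2 hc) fun m => ?_
    simp [norm_exp]
  have hfactor : ∀ m : ℤ, ∑ q, exp (I * m * (nodeAngle n p - nodeAngle n q)) * c m *
      exp (I * k * nodeAngle n q) = c m * ∑ q, exp (I * m * (nodeAngle n p - nodeAngle n q)) *
      exp (I * k * nodeAngle n q) := by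
    intro m
    rw [Finset.mul_sum]
    exact Finset.sum_congr rfl fun q _ => by ring
  simp only [Matrix.mulVec, dotProduct, Matrix.of_apply, Pi.smul_apply, smul_eq_mul]
  calc ∑ q, (∑' m : ℤ, exp (I * m * (nodeAngle n p - nodeAngle n q)) * c m) *
        exp (I * k * nodeAngle n q)
      = ∑' m : ℤ, c m * ∑ q, exp (I * m * (nodeAngle n p - nodeAngle n q)) *
          exp (I * k * nodeAngle n q) := by
        simp_rw [← hfactor, ← tsum_mul_right]
        exact (Summable.tsum_finsetSum fun q _ => hsummable q).symm
    _ = ∑' m : ℤ, if (n : ℤ) ∣ m - k then c m * (n * exp (I * k * nodeAngle n p)) else 0 := by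
        simp_rw [sum_exp_I_mul_nodeAngle_sub_mul, mul_ite, mul_zero]
    _ = ∑' j : ℤ, c (k + n * j) * (n * exp (I * k * nodeAngle n p)) :=
        tsum_ite_dvd_sub_eq_tsum_add_mul hn _ k
    _ = n * (∑' j : ℤ, c (k + n * j)) * exp (I * k * nodeAngle n p) := by
        rw [tsum_mul_right]
        ring

theorem electrode_dtn_eigenvectors_general (n : ℕ)
    (f : ℕ → ℝ)
    (hf : Summable fun k : ℤ => |f (k.natAbs ^ 2)| / ((k : ℝ) ^ 2 + 1))
    (h : ℝ) (hh : h = 2 * Real.pi / n)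
    (θ : Fin n → ℝ) (hθ : ∀ p, θ p = 2 * Real.pi * ((p : ℕ) : ℝ) / n)
    (M : Matrix (Fin n) (Fin n) ℂ)
    (hM : M = Matrix.of fun (p q : Fin n) =>
      (1 / (2 * Real.pi) : ℂ) * ∑' m : ℤ,
        Complex.exp (Complex.I * m * (θ p - θ q)) *
          (f (m.natAbs ^ 2) : ℂ) * ((sinc ((m : ℝ) * h / 2) : ℝ) : ℂ) ^ 2)
    (k : ℤ) (hk : 2 * |k| ≤ (n : ℤ) - 1)
    (v : Fin n → ℂ) (hv : v = fun p => Complex.exp (Complex.I * k * (θ p))) :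
    M.mulVec v = ((1 / (h : ℂ)) * ∑' j : ℤ,
        (f ((k + n * j).natAbs ^ 2) : ℂ) *
          ((sinc (((k + n * j : ℤ) : ℝ) * h / 2) : ℝ) : ℂ) ^ 2) • v ∧
      ((∀ m : ℤ, (n : ℤ) - 1 < 2 * |m| →
          f (m.natAbs ^ 2) * (sinc ((m : ℝ) * h / 2)) ^ 2 = 0) →
        M.mulVec v =
          ((f (k.natAbs ^ 2) * (sinc ((k : ℝ) * h / 2)) ^ 2 / h : ℝ) : ℂ) • v) := by
  obtain rfl : θ = nodeAngle n := funext hθ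
  have hn : (n : ℝ) ≠ 0 := by
    have : (n : ℤ) ≠ 0 := by linarith [abs_nonneg k]
    exact_mod_cast this
  set c : ℤ → ℂ := fun m => (f (m.natAbs ^ 2) : ℂ) * ((sinc ((m : ℝ) * h / 2) : ℝ) : ℂ) ^ 2
  have hc : Summable c := by
    have hh0 : h ≠ 0 := by rw [hh]; have := Real.pi_pos; positivity
    simpa [c] using Complex.summable_ofReal.2 (summable_mul_sinc_sq hh0 hf)
  have hM' : M = (1 / (2 * π) : ℂ) • Matrix.of fun p q : Fin n =>
      ∑' m : ℤ, exp (I * m * (nodeAngle n p - nodeAngle n q)) * c m := by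
    rw [hM]
    ext p q
    simp only [Matrix.of_apply, Matrix.smul_apply, smul_eq_mul, c, mul_assoc]
  have hscale : (1 / (2 * π) : ℂ) * n = 1 / h := by
    rw [hh]
    push_cast
    field_simp
  have heigen : M.mulVec v = (1 / (h : ℂ) * ∑' j : ℤ, c (k + n * j)) • v := by
    rw [hv, hM', Matrix.smul_mulVec, mulVec_exp_I_mul_nodeAngle hc, smul_smul, ← mul_assoc, hscale]
  refine ⟨heigen, fun hvanish => ?_⟩
  have hsingle : ∑' j : ℤ, c (k + n * j) = c k := by
    rw [tsum_eq_single 0 fun j hj => ?_, mul_zero, add_zero]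
    simp only [c]
    exact_mod_cast hvanish _ (sub_one_lt_two_mul_abs_add_mul hk hj)
  rw [heigen, hsingle]
  congr 1
  push_cast
  ring

/-- The matrix `(Λ_γ)_{p,q} = (1/2π) Σ_k e^{ik(θ_p-θ_q)} f(k²) sinc²(kh/2)` has the
sampled harmonics `(e^{ikθ_p})_p`, `|k| ≤ (n-1)/2`, as eigenvectors, with eigenvalue
`(1/h) F̃(ω_k²)`, `F̃(ω_k²) = Σ_{m ≡ k (n)} f(m²) sinc²(mh/2)`; in particular, when
`f(m²)sinc²(mh/2)` vanishes for `|m| > (n-1)/2`, the eigenvalue is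
`f(k²)sinc²(kh/2)/h`. -/
theorem electrode_dtn_eigenvectors (n : ℕ) (hn : 0 < n) (hodd : Odd n)
    (f : ℕ → ℝ)
    (hf : Summable fun k : ℤ => |f (k.natAbs ^ 2)| / ((k : ℝ) ^ 2 + 1))
    (h : ℝ) (hh : h = 2 * Real.pi / n)
    (θ : Fin n → ℝ) (hθ : ∀ p, θ p = 2 * Real.pi * ((p : ℕ) : ℝ) / n)
    (M : Matrix (Fin n) (Fin n) ℂ)
    (hM : M = Matrix.of fun (p q : Fin n) =>
      (1 / (2 * Real.pi) : ℂ) * ∑' m : ℤ,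
        Complex.exp (Complex.I * m * (θ p - θ q)) *
          (f (m.natAbs ^ 2) : ℂ) * ((sinc ((m : ℝ) * h / 2) : ℝ) : ℂ) ^ 2)
    (k : ℤ) (hk : 2 * |k| ≤ (n : ℤ) - 1)
    (v : Fin n → ℂ) (hv : v = fun p => Complex.exp (Complex.I * k * (θ p))) :
    M.mulVec v = ((1 / (h : ℂ)) * ∑' j : ℤ,
        (f ((k + n * j).natAbs ^ 2) : ℂ) *
          ((sinc (((k + n * j : ℤ) : ℝ) * h / 2) : ℝ) : ℂ) ^ 2) • v ∧
      ((∀ m : ℤ, (n : ℤ) - 1 < 2 * |m| →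
          f (m.natAbs ^ 2) * (sinc ((m : ℝ) * h / 2)) ^ 2 = 0) →
        M.mulVec v =
          ((f (k.natAbs ^ 2) * (sinc ((k : ℝ) * h / 2)) ^ 2 / h : ℝ) : ℂ) • v) :=
  electrode_dtn_eigenvectors_general n f hf h hh θ hθ M hM k hk v hv
end
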